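/- Let E_r be the set of unit Frobenius norm Hermitian matrices lying in the descent cone of the nuclear norm at some nonzero Hermitian matrix of rank at most r. Then every Y ∈ E_r satisfies ‖Y‖_1 ≤ 2√r; equivalently, sup_{Y ∈ E_r} tr(AY) ≤ 2√r ‖A‖_∞ for every Hermitian matrix A. -/

import Mathlib

/-!
If `Y` is a descent direction of `‖·‖₁` at a Hermitian `X` of rank `d`, let `P` be the projection
onto the range of `X`, `Q = 1 - P`, and `E = sgn X`. The matrix `E + Q sgn(QYQ) Q` is a contraction
attaining `‖X‖₁` at `X`, so descent forces `‖QYQ‖₁ ≤ -tr(EY) ≤ ‖E‖_F ‖PYP‖_F = √d ‖PYP‖_F`.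
The remaining part `Y - QYQ = PYP + PYQ + QYP` is paired with its own sign `G`; since the blocks
`PGP`, `PGQ` of the contraction `G` have total squared Frobenius norm at most `tr P = d`,
Cauchy–Schwarz gives `‖Y - QYQ‖₁ ≤ √d √(a² + 4b²)` with `a = ‖PYP‖_F`, `b = ‖PYQ‖_F`.
Since `a² + 2b² ≤ ‖Y‖_F²`, the two bounds add up to `‖Y‖₁ ≤ √d (√(a² + 4b²) + a) ≤ 2√d ‖Y‖_F`.
Trace duality with the spectral norm then gives the second claim.
-/

open Matrix
open scoped ComplexOrder

/-- The square root of a positive semidefinite matrix (the definition of `Matrix.PosSemidef.sqrt`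
in the older Mathlib, which has since been removed). -/
noncomputable def Matrix.PosSemidef.sqrt {n : Type*} [Fintype n] [DecidableEq n] {𝕜 : Type*}
    [RCLike 𝕜] {A : Matrix n n 𝕜} (hA : A.PosSemidef) : Matrix n n 𝕜 :=
  hA.1.eigenvectorUnitary.1 * diagonal ((↑) ∘ (√·) ∘ hA.1.eigenvalues) *
    (star hA.1.eigenvectorUnitary : Matrix n n 𝕜)

theorem Matrix.PosSemidef.sqrt_isHermitian {n : Type*} [Fintype n] [DecidableEq n] {𝕜 : Type*}
    [RCLike 𝕜] {A : Matrix n n 𝕜} (hA : A.PosSemidef) : hA.sqrt.IsHermitian := by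
  unfold Matrix.PosSemidef.sqrt
  simp [IsHermitian, conjTranspose_mul, diagonal_conjTranspose, Matrix.mul_assoc,
    Matrix.star_eq_conjTranspose, conjTranspose_conjTranspose, Pi.star_def, RCLike.star_def,
    RCLike.conj_ofReal, Function.comp_def]

/-- The singular values of a complex square matrix `A`: the eigenvalues of `√(Aᴴ A)`. -/
noncomputable def singularValues {ι : Type*} [Fintype ι] [DecidableEq ι]
    (A : Matrix ι ι ℂ) : ι → ℝ :=
  (Matrix.posSemidef_conjTranspose_mul_self A).sqrt_isHermitian.eigenvalues

/-- The Schatten `p`-norm of a complex square matrix, `p ∈ [1, ∞]`: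
`(∑ σ_i(A)^p)^(1/p)` for finite `p` and `max_i σ_i(A)` for `p = ∞`. -/
noncomputable def schattenNorm {ι : Type*} [Fintype ι] [DecidableEq ι]
    (p : ENNReal) (A : Matrix ι ι ℂ) : ℝ :=
  if p = ⊤ then ⨆ i, singularValues A i
  else (∑ i, singularValues A i ^ p.toReal) ^ (1 / p.toReal)

/-- The descent cone of the nuclear norm at a Hermitian matrix `X`:
`D(‖·‖_1, X) = ∪_{τ>0} {Y : ‖X + τY‖_1 ≤ ‖X‖_1}`. -/
def nuclearDescentCone {n : ℕ} (X : Matrix (Fin n) (Fin n) ℂ) :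
    Set (Matrix (Fin n) (Fin n) ℂ) :=
  {Y | ∃ τ : ℝ, 0 < τ ∧ schattenNorm 1 (X + (τ : ℂ) • Y) ≤ schattenNorm 1 X}

/-- `E_r`: the set of unit Frobenius norm Hermitian matrices lying in the descent cone of the
nuclear norm at some nonzero Hermitian matrix of rank at most `r`. -/
def Er (n r : ℕ) : Set (Matrix (Fin n) (Fin n) ℂ) :=
  {Y | Y.IsHermitian ∧ schattenNorm 2 Y = 1 ∧
    ∃ X : Matrix (Fin n) (Fin n) ℂ, X.IsHermitian ∧ X ≠ 0 ∧ X.rank ≤ r ∧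
      Y ∈ nuclearDescentCone X}

open scoped MatrixOrder

namespace Matrix.IsHermitian

variable {n 𝕜 : Type*} [RCLike 𝕜] [Fintype n] [DecidableEq n] {A : Matrix n n 𝕜}
  (hA : A.IsHermitian)

lemma cfc_congr {f g : ℝ → ℝ} (h : ∀ i, f (hA.eigenvalues i) = g (hA.eigenvalues i)) :
    hA.cfc f = hA.cfc g := by
  simp only [IsHermitian.cfc, Function.comp_def, h]

lemma cfc_id' : hA.cfc (fun x => x) = A :=
  hA.spectral_theorem.symm

lemma cfc_mul_cfc (f g : ℝ → ℝ) : hA.cfc f * hA.cfc g = hA.cfc (fun x => f x * g x) := by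
  rw [IsHermitian.cfc, IsHermitian.cfc, IsHermitian.cfc, ← map_mul, diagonal_mul_diagonal]
  simp [Function.comp_def]

lemma cfc_neg (f : ℝ → ℝ) : hA.cfc (fun x => -f x) = -hA.cfc f := by
  rw [IsHermitian.cfc, IsHermitian.cfc, ← map_neg, diagonal_neg]
  simp [Function.comp_def]

lemma cfc_const (c : ℝ) : hA.cfc (fun _ => c) = c • (1 : Matrix n n 𝕜) := by
  have h : diagonal (RCLike.ofReal ∘ (fun _ => c) ∘ hA.eigenvalues) =
      (c : 𝕜) • (1 : Matrix n n 𝕜) := by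
    ext i j
    simp [diagonal_apply, one_apply]
  rw [IsHermitian.cfc, h, map_smul, map_one, RCLike.real_smul_eq_coe_smul (K := 𝕜)]

lemma isHermitian_cfc (f : ℝ → ℝ) : (hA.cfc f).IsHermitian := by
  rw [IsHermitian, ← star_eq_conjTranspose, IsHermitian.cfc, ← map_star, star_eq_conjTranspose,
    diagonal_conjTranspose]
  congr 2
  ext i
  simp

lemma cfc_le_cfc {f g : ℝ → ℝ} (h : ∀ i, f (hA.eigenvalues i) ≤ g (hA.eigenvalues i)) :
    hA.cfc f ≤ hA.cfc g := by
  rw [le_iff, IsHermitian.cfc, IsHermitian.cfc, ← map_sub, diagonal_sub,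
    Unitary.conjStarAlgAut_apply]
  refine PosSemidef.mul_mul_conjTranspose_same (PosSemidef.diagonal fun i => ?_) _
  simpa using h i

lemma trace_cfc (f : ℝ → ℝ) : (hA.cfc f).trace = ∑ i, (f (hA.eigenvalues i) : 𝕜) := by
  rw [IsHermitian.cfc, Unitary.conjStarAlgAut_apply, trace_mul_cycle, Unitary.coe_star_mul_self,
    one_mul, trace_diagonal]
  rfl

end Matrix.IsHermitian

section LoewnerOrder

variable {ι : Type*} {A B : Matrix ι ι ℂ}

lemma re_diag_le_of_le (h : A ≤ B) (i : ι) : (A i i).re ≤ (B i i).re := by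
  have := (Complex.le_def.mp (h.diag_nonneg (i := i))).1
  simpa [sub_nonneg] using this

lemma re_trace_le_of_le [Fintype ι] (h : A ≤ B) : A.trace.re ≤ B.trace.re := by
  have := (Complex.le_def.mp h.trace_nonneg).1
  rw [trace_sub, Complex.sub_re] at this
  simpa [sub_nonneg] using this

end LoewnerOrder

section SchattenNorm

variable {ι : Type*} [Fintype ι] [DecidableEq ι]

lemma Matrix.PosSemidef.sqrt_eq_cfc {A : Matrix ι ι ℂ} (hA : A.PosSemidef) :
    hA.sqrt = hA.1.cfc Real.sqrt :=
  rfl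

lemma Matrix.PosSemidef.posSemidef_sqrt {A : Matrix ι ι ℂ} (hA : A.PosSemidef) :
    hA.sqrt.PosSemidef := by
  have h := hA.1.cfc_le_cfc (f := fun _ => 0) (g := Real.sqrt) fun _ => Real.sqrt_nonneg _
  rwa [hA.1.cfc_const, zero_smul, nonneg_iff_posSemidef] at h

lemma Matrix.PosSemidef.sqrt_mul_self {A : Matrix ι ι ℂ} (hA : A.PosSemidef) :
    hA.sqrt * hA.sqrt = A := by
  rw [hA.sqrt_eq_cfc, hA.1.cfc_mul_cfc]
  exact (hA.1.cfc_congr fun i => Real.mul_self_sqrt (hA.eigenvalues_nonneg i)).trans hA.1.cfc_id'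

lemma Matrix.IsHermitian.sqrt_conjTranspose_mul_self {A : Matrix ι ι ℂ} (hA : A.IsHermitian) :
    (posSemidef_conjTranspose_mul_self A).sqrt = hA.cfc (|·|) := by
  have hsq : Aᴴ * A = cfc (· ^ 2 : ℝ → ℝ) A := by
    rw [cfc_pow_id A 2 hA.isSelfAdjoint, hA.eq, sq]
  rw [PosSemidef.sqrt_eq_cfc, ← IsHermitian.cfc_eq, ← hA.cfc_eq, hsq,
    ← cfc_comp' Real.sqrt (· ^ 2) A (ha := hA.isSelfAdjoint)]
  simp only [Real.sqrt_sq_eq_abs]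

lemma singularValues_nonneg (A : Matrix ι ι ℂ) (i : ι) : 0 ≤ singularValues A i :=
  (posSemidef_conjTranspose_mul_self A).posSemidef_sqrt.eigenvalues_nonneg i

lemma sum_singularValues (A : Matrix ι ι ℂ) :
    ∑ i, singularValues A i = (posSemidef_conjTranspose_mul_self A).sqrt.trace.re := by
  simp [(posSemidef_conjTranspose_mul_self A).sqrt_isHermitian.trace_eq_sum_eigenvalues,
    singularValues]

lemma sum_singularValues_sq (A : Matrix ι ι ℂ) :
    ∑ i, singularValues A i ^ 2 = (Aᴴ * A).trace.re := by
  have hS := (posSemidef_conjTranspose_mul_self A).sqrt_isHermitian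
  calc ∑ i, singularValues A i ^ 2
      = (hS.cfc (fun x => x * x)).trace.re := by simp [hS.trace_cfc, sq, singularValues]
    _ = (Aᴴ * A).trace.re := by
      rw [← hS.cfc_mul_cfc, hS.cfc_id', PosSemidef.sqrt_mul_self]

lemma Matrix.IsHermitian.schattenNorm_one_eq {A : Matrix ι ι ℂ} (hA : A.IsHermitian) :
    schattenNorm 1 A = ∑ i, |hA.eigenvalues i| := by
  rw [schattenNorm, if_neg ENNReal.one_ne_top]
  simp [sum_singularValues, hA.sqrt_conjTranspose_mul_self, hA.trace_cfc]

lemma schattenNorm_top_nonneg (A : Matrix ι ι ℂ) : 0 ≤ schattenNorm ⊤ A := by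
  rw [schattenNorm, if_pos rfl]
  exact Real.iSup_nonneg (singularValues_nonneg A)

lemma Matrix.IsHermitian.abs_eigenvalues_le_schattenNorm_top {A : Matrix ι ι ℂ}
    (hA : A.IsHermitian) (i : ι) : |hA.eigenvalues i| ≤ schattenNorm ⊤ A := by
  have hmem : |hA.eigenvalues i| ∈ Set.range (singularValues A) := by
    rw [singularValues, ← spectrum_real_eq_range_eigenvalues, hA.sqrt_conjTranspose_mul_self,
      ← hA.cfc_eq, cfc_map_spectrum (|·|) A hA.isSelfAdjoint]
    exact ⟨_, hA.eigenvalues_mem_spectrum_real i, rfl⟩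
  obtain ⟨j, hj⟩ := hmem
  rw [schattenNorm, if_pos rfl, ← hj]
  exact le_ciSup (Set.finite_range _).bddAbove j

lemma schattenNorm_two_eq (A : Matrix ι ι ℂ) : schattenNorm 2 A = √(Aᴴ * A).trace.re := by
  rw [schattenNorm, if_neg ENNReal.ofNat_ne_top, ← sum_singularValues_sq, Real.sqrt_eq_rpow]
  norm_num

end SchattenNorm

section Frobenius

variable {ι : Type*} [Fintype ι] [DecidableEq ι]

lemma schattenNorm_two_nonneg (A : Matrix ι ι ℂ) : 0 ≤ schattenNorm 2 A := by
  rw [schattenNorm_two_eq]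
  exact Real.sqrt_nonneg _

lemma schattenNorm_two_sq (A : Matrix ι ι ℂ) : schattenNorm 2 A ^ 2 = (Aᴴ * A).trace.re := by
  rw [schattenNorm_two_eq, Real.sq_sqrt]
  rw [← sum_singularValues_sq]
  positivity

lemma schattenNorm_two_conjTranspose (A : Matrix ι ι ℂ) :
    schattenNorm 2 Aᴴ = schattenNorm 2 A := by
  rw [schattenNorm_two_eq, schattenNorm_two_eq, conjTranspose_conjTranspose, trace_mul_comm]

lemma schattenNorm_two_neg (A : Matrix ι ι ℂ) : schattenNorm 2 (-A) = schattenNorm 2 A := by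
  rw [schattenNorm_two_eq, schattenNorm_two_eq, conjTranspose_neg, neg_mul_neg]

lemma re_trace_conjTranspose_mul_le (A B : Matrix ι ι ℂ) :
    (Aᴴ * B).trace.re ≤ schattenNorm 2 A * schattenNorm 2 B := by
  have h (C D : Matrix ι ι ℂ) :
      (Cᴴ * D).trace = inner ℂ (WithLp.toLp 2 C.vec) (WithLp.toLp 2 D.vec) := by
    rw [EuclideanSpace.inner_eq_star_dotProduct, dotProduct_comm, star_vec_dotProduct_vec]
  have hnorm (C : Matrix ι ι ℂ) : schattenNorm 2 C = ‖WithLp.toLp 2 C.vec‖ := by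
    rw [schattenNorm_two_eq, h, norm_eq_sqrt_re_inner (𝕜 := ℂ)]
    rfl
  rw [h, hnorm, hnorm]
  exact re_inner_le_norm (𝕜 := ℂ) _ _

lemma schattenNorm_two_mul_le {G : Matrix ι ι ℂ} (hG : Gᴴ * G ≤ 1) (Z : Matrix ι ι ℂ) :
    schattenNorm 2 (G * Z) ≤ schattenNorm 2 Z := by
  have h := re_trace_le_of_le (star_left_conjugate_le_conjugate hG Z)
  have e : (G * Z)ᴴ * (G * Z) = star Z * (Gᴴ * G) * Z := by
    simp [conjTranspose_mul, Matrix.mul_assoc, star_eq_conjTranspose]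
  rw [← e, Matrix.mul_one, star_eq_conjTranspose, ← schattenNorm_two_sq,
    ← schattenNorm_two_sq] at h
  exact (pow_le_pow_iff_left₀ (schattenNorm_two_nonneg _) (schattenNorm_two_nonneg _)
    two_ne_zero).mp h

variable {P : Matrix ι ι ℂ}

lemma IsStarProjection.schattenNorm_two_sq (hP : IsStarProjection P) :
    schattenNorm 2 P ^ 2 = P.trace.re := by
  rw [_root_.schattenNorm_two_sq, ← star_eq_conjTranspose, hP.isSelfAdjoint.star_eq,
    hP.isIdempotentElem.eq]

lemma schattenNorm_two_sq_eq_add (hP : IsStarProjection P) (Z : Matrix ι ι ℂ) :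
    schattenNorm 2 Z ^ 2 = schattenNorm 2 (P * Z) ^ 2 + schattenNorm 2 ((1 - P) * Z) ^ 2 := by
  have hsq {R : Matrix ι ι ℂ} (hR : IsStarProjection R) : (R * Z)ᴴ * (R * Z) = Zᴴ * R * Z := by
    rw [conjTranspose_mul, ← star_eq_conjTranspose R, hR.isSelfAdjoint.star_eq, Matrix.mul_assoc,
      ← Matrix.mul_assoc R, hR.isIdempotentElem.eq, Matrix.mul_assoc]
  rw [schattenNorm_two_sq, schattenNorm_two_sq, schattenNorm_two_sq, hsq hP, hsq hP.one_sub,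
    ← Complex.add_re, ← trace_add, ← add_mul, ← mul_add, add_sub_cancel, Matrix.mul_one]

lemma schattenNorm_two_sq_eq_add' (hP : IsStarProjection P) (Z : Matrix ι ι ℂ) :
    schattenNorm 2 Z ^ 2 = schattenNorm 2 (Z * P) ^ 2 + schattenNorm 2 (Z * (1 - P)) ^ 2 := by
  have hP' : Pᴴ = P := hP.isSelfAdjoint
  have hQ' : (1 - P)ᴴ = 1 - P := hP.one_sub.isSelfAdjoint
  rw [← schattenNorm_two_conjTranspose Z, schattenNorm_two_sq_eq_add hP,
    ← schattenNorm_two_conjTranspose (Z * P), ← schattenNorm_two_conjTranspose (Z * (1 - P)),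
    conjTranspose_mul, conjTranspose_mul, hP', hQ']

end Frobenius

section Duality

variable {ι : Type*} [Fintype ι] [DecidableEq ι]

lemma abs_re_diag_unitary_conj_le {G : Matrix ι ι ℂ} {c : ℝ} (hlo : -(c • 1) ≤ G)
    (hhi : G ≤ c • 1) (U : unitary (Matrix ι ι ℂ)) (i : ι) :
    |((star (U : Matrix ι ι ℂ) * G * U) i i).re| ≤ c := by
  have hscalar (a : ℝ) : star (U : Matrix ι ι ℂ) * (a • 1) * U = a • 1 := by simp
  have hlo' := re_diag_le_of_le (star_left_conjugate_le_conjugate hlo (U : Matrix ι ι ℂ)) i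
  have hhi' := re_diag_le_of_le (star_left_conjugate_le_conjugate hhi (U : Matrix ι ι ℂ)) i
  rw [← neg_smul, hscalar] at hlo'
  rw [hscalar] at hhi'
  simp only [Matrix.smul_apply, one_apply_eq, Complex.real_smul, mul_one,
    Complex.ofReal_re] at hlo' hhi'
  exact abs_le.mpr ⟨hlo', hhi'⟩

lemma Matrix.IsHermitian.re_trace_mul_eq_sum {M : Matrix ι ι ℂ} (hM : M.IsHermitian)
    (G : Matrix ι ι ℂ) :
    (G * M).trace.re = ∑ i, hM.eigenvalues i *
      ((star (hM.eigenvectorUnitary : Matrix ι ι ℂ) * G * hM.eigenvectorUnitary) i i).re := by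
  conv_lhs => rw [← hM.cfc_id', IsHermitian.cfc, Unitary.conjStarAlgAut_apply,
    ← Matrix.mul_assoc, trace_mul_cycle, ← Matrix.mul_assoc]
  simp [trace, mul_diagonal, mul_comm]

lemma Matrix.IsHermitian.re_trace_mul_le {M G : Matrix ι ι ℂ} (hM : M.IsHermitian) {c : ℝ}
    (hlo : -(c • 1) ≤ G) (hhi : G ≤ c • 1) : (G * M).trace.re ≤ c * schattenNorm 1 M := by
  rw [hM.re_trace_mul_eq_sum, hM.schattenNorm_one_eq, Finset.mul_sum]
  refine Finset.sum_le_sum fun i _ => ?_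
  calc _ ≤ |hM.eigenvalues i| * |((star (hM.eigenvectorUnitary : Matrix ι ι ℂ) * G *
          hM.eigenvectorUnitary) i i).re| := by rw [← abs_mul]; exact le_abs_self _
    _ ≤ |hM.eigenvalues i| * c :=
        mul_le_mul_of_nonneg_left (abs_re_diag_unitary_conj_le hlo hhi _ i) (abs_nonneg _)
    _ = c * |hM.eigenvalues i| := mul_comm _ _

lemma Matrix.IsHermitian.re_trace_mul_le_schattenNorm_one {M G : Matrix ι ι ℂ}
    (hM : M.IsHermitian) (hlo : -1 ≤ G) (hhi : G ≤ 1) : (G * M).trace.re ≤ schattenNorm 1 M := by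
  simpa using hM.re_trace_mul_le (c := 1) (by simpa using hlo) (by simpa using hhi)

lemma Matrix.IsHermitian.re_trace_mul_le_schattenNorm_top {A M : Matrix ι ι ℂ}
    (hA : A.IsHermitian) (hM : M.IsHermitian) :
    (A * M).trace.re ≤ schattenNorm ⊤ A * schattenNorm 1 M := by
  have hbound (i : ι) := abs_le.mp (hA.abs_eigenvalues_le_schattenNorm_top i)
  refine hM.re_trace_mul_le ?_ ?_
  · rw [← neg_smul, ← hA.cfc_const]
    conv_rhs => rw [← hA.cfc_id']
    exact hA.cfc_le_cfc fun i => (hbound i).1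
  · rw [← hA.cfc_const]
    conv_lhs => rw [← hA.cfc_id']
    exact hA.cfc_le_cfc fun i => (hbound i).2

end Duality

namespace Matrix.IsHermitian

variable {ι : Type*} [Fintype ι] [DecidableEq ι] {A : Matrix ι ι ℂ}

noncomputable def sign (hA : A.IsHermitian) : Matrix ι ι ℂ :=
  hA.cfc fun x => (SignType.sign x : ℝ)

/-- The orthogonal projection onto the range of `A`. -/
noncomputable def supportProj (hA : A.IsHermitian) : Matrix ι ι ℂ :=
  hA.cfc fun x => (SignType.sign x : ℝ) ^ 2

variable (hA : A.IsHermitian)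

lemma isHermitian_sign : hA.sign.IsHermitian := hA.isHermitian_cfc _

lemma neg_one_le_sign : -1 ≤ hA.sign := by
  have h := hA.cfc_le_cfc (f := fun _ => -1) (g := fun x => (SignType.sign x : ℝ))
    fun i => by rcases lt_trichotomy (hA.eigenvalues i) 0 with h | h | h <;> simp [h]
  rwa [hA.cfc_const, neg_one_smul] at h

lemma sign_le_one : hA.sign ≤ 1 := by
  have h := hA.cfc_le_cfc (f := fun x => (SignType.sign x : ℝ)) (g := fun _ => 1)
    fun i => by rcases lt_trichotomy (hA.eigenvalues i) 0 with h | h | h <;> simp [h]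
  rwa [hA.cfc_const, one_smul] at h

lemma re_trace_sign_mul : (hA.sign * A).trace.re = schattenNorm 1 A := by
  calc (hA.sign * A).trace.re = (hA.sign * hA.cfc fun x => x).trace.re := by rw [hA.cfc_id']
    _ = schattenNorm 1 A := by simp [sign, cfc_mul_cfc, trace_cfc, hA.schattenNorm_one_eq]

lemma sign_mul_sign : hA.sign * hA.sign = hA.supportProj := by
  rw [sign, cfc_mul_cfc, supportProj]
  simp only [sq]

lemma isStarProjection_supportProj : IsStarProjection hA.supportProj where
  isIdempotentElem := by
    rw [IsIdempotentElem, supportProj, cfc_mul_cfc]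
    exact hA.cfc_congr fun i => by
      rcases lt_trichotomy (hA.eigenvalues i) 0 with h | h | h <;> simp [h]
  isSelfAdjoint := hA.isHermitian_cfc _

lemma supportProj_le_one : hA.supportProj ≤ 1 := by
  have h := hA.cfc_le_cfc (f := fun x => (SignType.sign x : ℝ) ^ 2) (g := fun _ => 1)
    fun i => by rcases lt_trichotomy (hA.eigenvalues i) 0 with h | h | h <;> simp [h]
  rwa [hA.cfc_const, one_smul] at h

lemma supportProj_mul_sign_mul_supportProj :
    hA.supportProj * hA.sign * hA.supportProj = hA.sign := by
  rw [sign, supportProj, cfc_mul_cfc, cfc_mul_cfc]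
  exact hA.cfc_congr fun i => by
    rcases lt_trichotomy (hA.eigenvalues i) 0 with h | h | h <;> simp [h]

lemma neg_supportProj_le_sign : -hA.supportProj ≤ hA.sign := by
  rw [supportProj, ← cfc_neg]
  exact hA.cfc_le_cfc fun i => by
    rcases lt_trichotomy (hA.eigenvalues i) 0 with h | h | h <;> simp [h]

lemma sign_le_supportProj : hA.sign ≤ hA.supportProj :=
  hA.cfc_le_cfc fun i => by
    rcases lt_trichotomy (hA.eigenvalues i) 0 with h | h | h <;> simp [h]

lemma supportProj_mul : hA.supportProj * A = A := by
  calc hA.supportProj * A = hA.supportProj * hA.cfc fun x => x := by rw [hA.cfc_id']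
    _ = hA.cfc fun x => x := by
      rw [supportProj, cfc_mul_cfc]
      exact hA.cfc_congr fun i => by
        rcases lt_trichotomy (hA.eigenvalues i) 0 with h | h | h <;> simp [h]
    _ = A := hA.cfc_id'

lemma one_sub_supportProj_mul : (1 - hA.supportProj) * A = 0 := by
  rw [sub_mul, supportProj_mul, Matrix.one_mul, sub_self]

lemma re_trace_supportProj : hA.supportProj.trace.re = A.rank := by
  rw [supportProj, trace_cfc, hA.rank_eq_card_non_zero_eigs, Fintype.card_subtype,
    Finset.card_filter, Complex.re_sum]
  push_cast
  refine Finset.sum_congr rfl fun i _ => ?_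
  rcases lt_trichotomy (hA.eigenvalues i) 0 with h | h | h
  · simp [h, h.ne]
  · simp [h]
  · simp [h, h.ne']

end Matrix.IsHermitian

section StarOrderedRing

variable {R : Type*} [Ring R] [PartialOrder R] [StarRing R] [StarOrderedRing R] {p a : R}

lemma IsStarProjection.neg_le_mul_mul (hp : IsStarProjection p) (ha : -1 ≤ a) :
    -p ≤ p * a * p := by
  simpa [hp.isSelfAdjoint.star_eq, hp.isIdempotentElem.eq] using
    star_left_conjugate_le_conjugate ha p

lemma IsStarProjection.mul_mul_le (hp : IsStarProjection p) (ha : a ≤ 1) : p * a * p ≤ p := by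
  simpa [hp.isSelfAdjoint.star_eq, hp.isIdempotentElem.eq] using
    star_left_conjugate_le_conjugate ha p

end StarOrderedRing

lemma sqrt_sq_add_four_mul_sq_add_le {a b t : ℝ} (ht : 0 ≤ t)
    (h : a ^ 2 + 2 * b ^ 2 ≤ t ^ 2) : √(a ^ 2 + 4 * b ^ 2) + a ≤ 2 * t := by
  have hat : a ≤ t := by nlinarith [sq_nonneg b]
  have : √(a ^ 2 + 4 * b ^ 2) ≤ 2 * t - a :=
    Real.sqrt_le_iff.mpr ⟨by linarith, by nlinarith [sq_nonneg (t - a)]⟩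
  linarith

section Compression

variable {ι : Type*} [Fintype ι] {P G Y : Matrix ι ι ℂ}

lemma IsStarProjection.isHermitian_mul_mul (hP : IsStarProjection P) (hY : Y.IsHermitian) :
    (P * Y * P).IsHermitian := by
  simpa [← star_eq_conjTranspose, hP.isSelfAdjoint.star_eq] using
    isHermitian_conjTranspose_mul_mul P hY

lemma trace_mul_compress {Q : Matrix ι ι ℂ} (hP : IsStarProjection P) (hQ : IsStarProjection Q)
    (hG : G.IsHermitian) (Z : Matrix ι ι ℂ) :
    (G * (P * Z * Q)).trace = ((P * G * Q)ᴴ * (P * Z * Q)).trace := by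
  have hP' : Pᴴ = P := hP.isSelfAdjoint
  have hQ' : Qᴴ = Q := hQ.isSelfAdjoint
  rw [conjTranspose_mul, conjTranspose_mul, hP', hQ', hG.eq, Matrix.mul_assoc Q, trace_mul_comm Q]
  simp only [Matrix.mul_assoc, ← Matrix.mul_assoc P P, hP.isIdempotentElem.eq,
    hQ.isIdempotentElem.eq]

lemma re_trace_mul_conjTranspose (hG : G.IsHermitian) (Z : Matrix ι ι ℂ) :
    (G * Zᴴ).trace.re = (G * Z).trace.re := by
  rw [← hG.eq, ← conjTranspose_mul, trace_conjTranspose, hG.eq, trace_mul_comm]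
  rfl

variable [DecidableEq ι]

lemma Matrix.IsHermitian.schattenNorm_one_add_le {A B : Matrix ι ι ℂ} (hA : A.IsHermitian)
    (hB : B.IsHermitian) :
    schattenNorm 1 (A + B) ≤ schattenNorm 1 A + schattenNorm 1 B := by
  have hAB := hA.add hB
  rw [← hAB.re_trace_sign_mul, mul_add, trace_add, Complex.add_re]
  exact add_le_add (hA.re_trace_mul_le_schattenNorm_one hAB.neg_one_le_sign hAB.sign_le_one)
    (hB.re_trace_mul_le_schattenNorm_one hAB.neg_one_le_sign hAB.sign_le_one)

lemma conjTranspose_compress (hP : IsStarProjection P) (hY : Y.IsHermitian) :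
    (P * Y * (1 - P))ᴴ = (1 - P) * Y * P := by
  rw [conjTranspose_mul, conjTranspose_mul, ← star_eq_conjTranspose P,
    ← star_eq_conjTranspose (1 - P), hP.isSelfAdjoint.star_eq, hP.one_sub.isSelfAdjoint.star_eq,
    hY.eq, Matrix.mul_assoc]

lemma schattenNorm_two_sq_compress_add_le (hP : IsStarProjection P) (hY : Y.IsHermitian) :
    schattenNorm 2 (P * Y * P) ^ 2 + 2 * schattenNorm 2 (P * Y * (1 - P)) ^ 2 ≤
      schattenNorm 2 Y ^ 2 := by
  have hQYP : schattenNorm 2 ((1 - P) * Y * P) = schattenNorm 2 (P * Y * (1 - P)) := by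
    rw [← conjTranspose_compress hP hY, schattenNorm_two_conjTranspose]
  rw [schattenNorm_two_sq_eq_add hP Y, schattenNorm_two_sq_eq_add' hP (P * Y),
    schattenNorm_two_sq_eq_add' hP ((1 - P) * Y), hQYP]
  nlinarith [sq_nonneg (schattenNorm 2 ((1 - P) * Y * (1 - P)))]

lemma schattenNorm_two_sq_compress_add_le_trace (hP : IsStarProjection P) (hG : G.IsHermitian)
    (hGG : G * G ≤ 1) :
    schattenNorm 2 (P * G * P) ^ 2 + schattenNorm 2 (P * G * (1 - P)) ^ 2 ≤ P.trace.re := by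
  have hGP : schattenNorm 2 (G * P) ≤ schattenNorm 2 P :=
    schattenNorm_two_mul_le (hG.eq.symm ▸ hGG) P
  rw [← schattenNorm_two_sq_eq_add' hP, ← schattenNorm_two_conjTranspose, conjTranspose_mul,
    hG.eq, ← star_eq_conjTranspose, hP.isSelfAdjoint.star_eq, ← hP.schattenNorm_two_sq]
  exact pow_le_pow_left₀ (schattenNorm_two_nonneg _) hGP 2

lemma schattenNorm_one_sub_compress_le (hP : IsStarProjection P) (hY : Y.IsHermitian) :
    schattenNorm 1 (Y - (1 - P) * Y * (1 - P)) ≤ √P.trace.re *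
      √(schattenNorm 2 (P * Y * P) ^ 2 + 4 * schattenNorm 2 (P * Y * (1 - P)) ^ 2) := by
  set Q := 1 - P with hQdef
  set M := Y - Q * Y * Q
  have hM : M.IsHermitian := hY.sub (hP.one_sub.isHermitian_mul_mul hY)
  have hdecomp : M = P * Y * P + P * Y * Q + (P * Y * Q)ᴴ := by
    rw [conjTranspose_compress hP hY]
    simp only [M, hQdef]
    noncomm_ring
  set G := hM.sign
  have hG := hM.isHermitian_sign
  have hg := schattenNorm_two_sq_compress_add_le_trace hP hG
    (hM.sign_mul_sign ▸ hM.supportProj_le_one)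
  have h₁ : (G * (P * Y * P)).trace.re ≤
      schattenNorm 2 (P * G * P) * schattenNorm 2 (P * Y * P) := by
    rw [trace_mul_compress hP hP hG]
    exact re_trace_conjTranspose_mul_le _ _
  have h₂ : (G * (P * Y * Q)).trace.re ≤
      schattenNorm 2 (P * G * Q) * schattenNorm 2 (P * Y * Q) := by
    rw [trace_mul_compress hP hP.one_sub hG]
    exact re_trace_conjTranspose_mul_le _ _
  have hcs := Real.sum_mul_le_sqrt_mul_sqrt Finset.univ
    ![schattenNorm 2 (P * G * P), schattenNorm 2 (P * G * Q)]
    ![schattenNorm 2 (P * Y * P), 2 * schattenNorm 2 (P * Y * Q)]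
  simp only [Fin.sum_univ_two, Matrix.cons_val_zero, Matrix.cons_val_one, mul_pow,
    show (2 : ℝ) ^ 2 = 4 by norm_num] at hcs
  calc schattenNorm 1 M = (G * M).trace.re := hM.re_trace_sign_mul.symm
    _ = (G * (P * Y * P)).trace.re + 2 * (G * (P * Y * Q)).trace.re := by
      conv_lhs => rw [hdecomp]
      rw [mul_add, mul_add, trace_add, trace_add, Complex.add_re, Complex.add_re,
        re_trace_mul_conjTranspose hG]
      ring
    _ ≤ √(schattenNorm 2 (P * G * P) ^ 2 + schattenNorm 2 (P * G * Q) ^ 2) *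
        √(schattenNorm 2 (P * Y * P) ^ 2 + 4 * schattenNorm 2 (P * Y * Q) ^ 2) := by
      linarith
    _ ≤ _ := by gcongr

theorem schattenNorm_one_le_of_compress_le (hP : IsStarProjection P) (hY : Y.IsHermitian)
    (h : schattenNorm 1 ((1 - P) * Y * (1 - P)) ≤ √P.trace.re * schattenNorm 2 (P * Y * P)) :
    schattenNorm 1 Y ≤ 2 * √P.trace.re * schattenNorm 2 Y := by
  have hC := hP.one_sub.isHermitian_mul_mul hY
  have hreal := sqrt_sq_add_four_mul_sq_add_le (schattenNorm_two_nonneg Y)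
    (schattenNorm_two_sq_compress_add_le hP hY)
  calc schattenNorm 1 Y
      ≤ schattenNorm 1 (Y - (1 - P) * Y * (1 - P)) + schattenNorm 1 ((1 - P) * Y * (1 - P)) := by
        have h := (hY.sub hC).schattenNorm_one_add_le hC
        rwa [sub_add_cancel] at h
    _ ≤ √P.trace.re * (√(schattenNorm 2 (P * Y * P) ^ 2 +
          4 * schattenNorm 2 (P * Y * (1 - P)) ^ 2) + schattenNorm 2 (P * Y * P)) := by
        rw [mul_add]
        exact add_le_add (schattenNorm_one_sub_compress_le hP hY) h
    _ ≤ √P.trace.re * (2 * schattenNorm 2 Y) := by gcongr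
    _ = 2 * √P.trace.re * schattenNorm 2 Y := by ring

end Compression

section DescentCone

variable {ι : Type*} [Fintype ι] [DecidableEq ι] {X Y : Matrix ι ι ℂ}

lemma re_trace_mul_nonpos_of_descent {G : Matrix ι ι ℂ} (hX : X.IsHermitian)
    (hY : Y.IsHermitian) {τ : ℝ} (hτ : 0 < τ)
    (hdesc : schattenNorm 1 (X + (τ : ℂ) • Y) ≤ schattenNorm 1 X)
    (hlo : -1 ≤ G) (hhi : G ≤ 1) (hGX : (G * X).trace.re = schattenNorm 1 X) :
    (G * Y).trace.re ≤ 0 := by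
  have hXY : (X + (τ : ℂ) • Y).IsHermitian := hX.add (hY.smul (Complex.conj_ofReal τ))
  have h := (hXY.re_trace_mul_le_schattenNorm_one hlo hhi).trans hdesc
  rw [mul_add, trace_add, mul_smul_comm, trace_smul, Complex.add_re, hGX, smul_eq_mul,
    Complex.re_ofReal_mul] at h
  nlinarith

lemma Matrix.IsHermitian.neg_one_le_sign_add_compress {W : Matrix ι ι ℂ} (hX : X.IsHermitian)
    (hW : -1 ≤ W) : -1 ≤ hX.sign + (1 - hX.supportProj) * W * (1 - hX.supportProj) := by
  have h := add_le_add hX.neg_supportProj_le_sign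
    (hX.isStarProjection_supportProj.one_sub.neg_le_mul_mul hW)
  rwa [← neg_add, add_sub_cancel] at h

lemma Matrix.IsHermitian.sign_add_compress_le_one {W : Matrix ι ι ℂ} (hX : X.IsHermitian)
    (hW : W ≤ 1) : hX.sign + (1 - hX.supportProj) * W * (1 - hX.supportProj) ≤ 1 := by
  have h := add_le_add hX.sign_le_supportProj
    (hX.isStarProjection_supportProj.one_sub.mul_mul_le hW)
  rwa [add_sub_cancel] at h

lemma Matrix.IsHermitian.neg_re_trace_sign_mul_le (hX : X.IsHermitian) (Y : Matrix ι ι ℂ) :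
    -(hX.sign * Y).trace.re ≤ √X.rank * schattenNorm 2 (hX.supportProj * Y * hX.supportProj) := by
  set P := hX.supportProj
  set E := hX.sign
  have hEY : (E * Y).trace = (E * (P * Y * P)).trace := by
    have hPEP : P * E * P = E := hX.supportProj_mul_sign_mul_supportProj
    conv_lhs => rw [← hPEP]
    simp only [Matrix.mul_assoc]
    rw [trace_mul_comm P]
    simp only [Matrix.mul_assoc]
  have hE : schattenNorm 2 (-E) = √X.rank := by
    rw [schattenNorm_two_neg, schattenNorm_two_eq, hX.isHermitian_sign.eq, hX.sign_mul_sign,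
      hX.re_trace_supportProj]
  have hcs := re_trace_conjTranspose_mul_le (-E) (P * Y * P)
  rwa [conjTranspose_neg, hX.isHermitian_sign.eq, Matrix.neg_mul, trace_neg, Complex.neg_re,
    ← hEY, hE] at hcs

theorem schattenNorm_one_compress_le_of_descent (hX : X.IsHermitian) (hY : Y.IsHermitian)
    {τ : ℝ} (hτ : 0 < τ) (hdesc : schattenNorm 1 (X + (τ : ℂ) • Y) ≤ schattenNorm 1 X) :
    schattenNorm 1 ((1 - hX.supportProj) * Y * (1 - hX.supportProj)) ≤
      √X.rank * schattenNorm 2 (hX.supportProj * Y * hX.supportProj) := by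
  set Q := 1 - hX.supportProj
  have hC : (Q * Y * Q).IsHermitian :=
    hX.isStarProjection_supportProj.one_sub.isHermitian_mul_mul hY
  set G := hX.sign + Q * hC.sign * Q
  have hGX : (G * X).trace.re = schattenNorm 1 X := by
    rw [add_mul, Matrix.mul_assoc, hX.one_sub_supportProj_mul, Matrix.mul_zero, add_zero,
      hX.re_trace_sign_mul]
  have hGY : (G * Y).trace.re = (hX.sign * Y).trace.re + schattenNorm 1 (Q * Y * Q) := by
    rw [add_mul, trace_add, Complex.add_re, ← hC.re_trace_sign_mul, Matrix.mul_assoc,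
      Matrix.mul_assoc, trace_mul_comm Q]
    simp only [Matrix.mul_assoc]
  have hcert := re_trace_mul_nonpos_of_descent hX hY hτ hdesc
    (hX.neg_one_le_sign_add_compress hC.neg_one_le_sign)
    (hX.sign_add_compress_le_one hC.sign_le_one) hGX
  linarith [hX.neg_re_trace_sign_mul_le Y]

theorem schattenNorm_one_le_of_descent (hX : X.IsHermitian) (hY : Y.IsHermitian)
    {τ : ℝ} (hτ : 0 < τ) (hdesc : schattenNorm 1 (X + (τ : ℂ) • Y) ≤ schattenNorm 1 X) :
    schattenNorm 1 Y ≤ 2 * √X.rank * schattenNorm 2 Y := by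
  have h := schattenNorm_one_compress_le_of_descent hX hY hτ hdesc
  rw [← hX.re_trace_supportProj] at h ⊢
  exact schattenNorm_one_le_of_compress_le hX.isStarProjection_supportProj hY h

end DescentCone

/-- Every `Y ∈ E_r` satisfies `‖Y‖_1 ≤ 2√r`; equivalently, for every Hermitian `A`,
`sup_{Y ∈ E_r} tr(AY) ≤ 2√r ‖A‖_∞`. -/
theorem nuclearNorm_bound_on_descent_cone (n r : ℕ) :
    (∀ Y ∈ Er n r, schattenNorm 1 Y ≤ 2 * Real.sqrt r) ∧
      ∀ A : Matrix (Fin n) (Fin n) ℂ, A.IsHermitian →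
        ∀ Y ∈ Er n r, ((A * Y).trace).re ≤ 2 * Real.sqrt r * schattenNorm ⊤ A := by
  have hEr : ∀ Y ∈ Er n r, schattenNorm 1 Y ≤ 2 * √r := by
    rintro Y ⟨hY, hY2, X, hX, -, hXr, τ, hτ, hdesc⟩
    calc schattenNorm 1 Y ≤ 2 * √X.rank * schattenNorm 2 Y :=
          schattenNorm_one_le_of_descent hX hY hτ hdesc
      _ ≤ 2 * √r := by
          rw [hY2, mul_one]
          gcongr
  refine ⟨hEr, fun A hA Y hY => ?_⟩
  calc (A * Y).trace.re ≤ schattenNorm ⊤ A * schattenNorm 1 Y :=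
        hA.re_trace_mul_le_schattenNorm_top hY.1
    _ ≤ schattenNorm ⊤ A * (2 * √r) :=
        mul_le_mul_of_nonneg_left (hEr Y hY) (schattenNorm_top_nonneg A)
    _ = 2 * √r * schattenNorm ⊤ A := mul_comm _ _
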